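/- arXiv:2210.07454 — 2 statements merged into one kernel-verified Lean document; each statement's English description precedes it below -/
import Mathlib

section
/- Let m_t = (1−β₁) ∑_{s=1}^t β₁^{t−s} g_s with β₁ ∈ (0,1), and let w_t ∈ R^d be coordinatewise positive weights with w_{t+1} ≤ w_t coordinatewise (coordinatewise nonincreasing). Then ∑_{t=1}^T ‖w_t ⊙ m_t‖² ≤ ∑_{t=1}^T ‖w_t ⊙ g_t‖², where ⊙ denotes coordinatewise multiplication. -/
open Finset

lemma geom_range_bound {β : ℝ} (hβ0 : 0 < β) (hβ1 : β < 1) (n : ℕ) :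
    ∑ k ∈ range n, β ^ k ≤ 1 / (1 - β) := by
  have h1 : (1 : ℝ) - β > 0 := by linarith
  have he : ∑ k ∈ range n, β ^ k = (1 - β ^ n) / (1 - β) := by
    rw [geom_sum_eq (by linarith : β ≠ 1)]
    rw [div_eq_div_iff (by linarith) (by linarith)]
    ring
  rw [he]
  have hn : β ^ n ≥ 0 := pow_nonneg hβ0.le n
  rw [div_le_div_iff₀ h1 h1]
  nlinarith


lemma geom_sub_left {β : ℝ} (hβ0 : 0 < β) (hβ1 : β < 1) (a b : ℕ) :
    ∑ t ∈ Icc a b, β ^ (t - a) ≤ 1 / (1 - β) := by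
  rcases le_or_gt a b with hab | hab
  · have : ∑ t ∈ Icc a b, β ^ (t - a) = ∑ k ∈ range (b + 1 - a), β ^ k := by
      apply sum_nbij' (fun t => t - a) (fun k => k + a)
      · intro x hx; simp only [mem_Icc] at hx; simp only [mem_range]; omega
      · intro x hx; simp only [mem_range] at hx; simp only [mem_Icc]; omega
      · intro x hx; simp only [mem_Icc] at hx; omega
      · intro x hx; omega
      · intro x hx; rfl
    rw [this]; exact geom_range_bound hβ0 hβ1 _
  · rw [Icc_eq_empty (by omega), sum_empty]
    have h1 : (0:ℝ) ≤ 1 - β := by linarith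
    exact div_nonneg zero_le_one h1

lemma geom_sub_right {β : ℝ} (hβ0 : 0 < β) (hβ1 : β < 1) (a b : ℕ) :
    ∑ t ∈ Icc a b, β ^ (b - t) ≤ 1 / (1 - β) := by
  rcases le_or_gt a b with hab | hab
  · have : ∑ t ∈ Icc a b, β ^ (b - t) = ∑ k ∈ range (b + 1 - a), β ^ k := by
      apply sum_nbij' (fun t => b - t) (fun k => b - k)
      · intro x hx; simp only [mem_Icc] at hx; simp only [mem_range]; omega
      · intro x hx; simp only [mem_range] at hx; simp only [mem_Icc]; omega
      · intro x hx; simp only [mem_Icc] at hx; omega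
      · intro x hx; simp only [mem_range] at hx; omega
      · intro x hx; rfl
    rw [this]; exact geom_range_bound hβ0 hβ1 _
  · rw [Icc_eq_empty (by omega), sum_empty]
    have h1 : (0:ℝ) ≤ 1 - β := by linarith
    exact div_nonneg zero_le_one h1

lemma key_coord {β : ℝ} (hβ0 : 0 < β) (hβ1 : β < 1) (T : ℕ) (c x : ℕ → ℝ)
    (hcpos : ∀ t, 0 < c t) (hmono : ∀ t, c (t + 1) ≤ c t) :
    ∑ t ∈ Icc 1 T, (c t * ((1 - β) * ∑ s ∈ Icc 1 t, β ^ (t - s) * x s)) ^ 2 ≤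
      ∑ t ∈ Icc 1 T, (c t * x t) ^ 2 := by
  have h1β : (0 : ℝ) < 1 - β := by linarith
  have hanti : ∀ s t : ℕ, s ≤ t → c t ≤ c s := fun s t h =>
    antitone_nat_of_succ_le hmono h
  -- Step 1: pointwise bound
  have step1 : ∀ t ∈ Icc 1 T,
      (c t * ((1 - β) * ∑ s ∈ Icc 1 t, β ^ (t - s) * x s)) ^ 2 ≤
        (1 - β) * ∑ s ∈ Icc 1 t, β ^ (t - s) * (c s * x s) ^ 2 := by
    intro t _
    have hCS := sum_mul_sq_le_sq_mul_sq (Icc 1 t)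
      (fun s => Real.sqrt (β ^ (t - s)))
      (fun s => Real.sqrt (β ^ (t - s)) * (c t * x s))
    have hsq : ∀ s : ℕ, Real.sqrt (β ^ (t - s)) ^ 2 = β ^ (t - s) := fun s =>
      Real.sq_sqrt (pow_nonneg hβ0.le _)
    have hrw1 : ∀ s ∈ Icc 1 t,
        Real.sqrt (β ^ (t - s)) * (Real.sqrt (β ^ (t - s)) * (c t * x s))
          = β ^ (t - s) * (c t * x s) := by
      intro s _
      rw [← mul_assoc, Real.mul_self_sqrt (pow_nonneg hβ0.le _)]
    have hrw2 : ∀ s ∈ Icc 1 t,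
        (Real.sqrt (β ^ (t - s)) * (c t * x s)) ^ 2 = β ^ (t - s) * (c t * x s) ^ 2 := by
      intro s _; rw [mul_pow, hsq]
    rw [sum_congr rfl hrw1, sum_congr rfl hrw2, sum_congr rfl (fun s _ => hsq s)] at hCS
    have hA : ∑ s ∈ Icc 1 t, β ^ (t - s) ≤ 1 / (1 - β) := geom_sub_right hβ0 hβ1 1 t
    have hB : ∑ s ∈ Icc 1 t, β ^ (t - s) * (c t * x s) ^ 2 ≤
        ∑ s ∈ Icc 1 t, β ^ (t - s) * (c s * x s) ^ 2 := by
      apply sum_le_sum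
      intro s hs
      simp only [mem_Icc] at hs
      have hct : c t ≤ c s := hanti s t hs.2
      apply mul_le_mul_of_nonneg_left _ (pow_nonneg hβ0.le _)
      rw [mul_pow, mul_pow]
      exact mul_le_mul_of_nonneg_right (pow_le_pow_left₀ (hcpos t).le hct 2) (sq_nonneg _)
    have hBnn : 0 ≤ ∑ s ∈ Icc 1 t, β ^ (t - s) * (c t * x s) ^ 2 :=
      sum_nonneg fun s _ => mul_nonneg (pow_nonneg hβ0.le _) (sq_nonneg _)
    calc (c t * ((1 - β) * ∑ s ∈ Icc 1 t, β ^ (t - s) * x s)) ^ 2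
        = (1 - β) ^ 2 * (∑ s ∈ Icc 1 t, β ^ (t - s) * (c t * x s)) ^ 2 := by
          have hcmul : ∑ s ∈ Icc 1 t, β ^ (t - s) * (c t * x s)
              = c t * ∑ s ∈ Icc 1 t, β ^ (t - s) * x s := by
            rw [mul_sum]; exact sum_congr rfl fun s _ => by ring
          rw [hcmul]; ring
      _ ≤ (1 - β) ^ 2 * ((1 / (1 - β)) * ∑ s ∈ Icc 1 t, β ^ (t - s) * (c t * x s) ^ 2) := by
          apply mul_le_mul_of_nonneg_left _ (sq_nonneg _)
          calc (∑ s ∈ Icc 1 t, β ^ (t - s) * (c t * x s)) ^ 2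
              ≤ (∑ s ∈ Icc 1 t, β ^ (t - s)) * ∑ s ∈ Icc 1 t, β ^ (t - s) * (c t * x s) ^ 2 := hCS
            _ ≤ _ := mul_le_mul_of_nonneg_right hA hBnn
      _ = (1 - β) * ∑ s ∈ Icc 1 t, β ^ (t - s) * (c t * x s) ^ 2 := by
          field_simp; ring
      _ ≤ (1 - β) * ∑ s ∈ Icc 1 t, β ^ (t - s) * (c s * x s) ^ 2 :=
          mul_le_mul_of_nonneg_left hB h1β.le
  -- Step 2: swap and sum geometric series
  have step2 : ∑ t ∈ Icc 1 T, (1 - β) * ∑ s ∈ Icc 1 t, β ^ (t - s) * (c s * x s) ^ 2 ≤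
      ∑ t ∈ Icc 1 T, (c t * x t) ^ 2 := by
    have hswap : ∑ t ∈ Icc 1 T, ∑ s ∈ Icc 1 t, β ^ (t - s) * (c s * x s) ^ 2 =
        ∑ s ∈ Icc 1 T, ∑ t ∈ Icc s T, β ^ (t - s) * (c s * x s) ^ 2 := by
      rw [sum_sigma', sum_sigma']
      apply sum_nbij' (fun p => ⟨p.2, p.1⟩) (fun p => ⟨p.2, p.1⟩)
      · rintro ⟨t, s⟩ h
        simp only [mem_sigma, mem_Icc] at h ⊢; omega
      · rintro ⟨s, t⟩ h
        simp only [mem_sigma, mem_Icc] at h ⊢; omega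
      · rintro ⟨t, s⟩ _; rfl
      · rintro ⟨s, t⟩ _; rfl
      · rintro ⟨t, s⟩ _; rfl
    rw [← mul_sum, hswap]
    have : ∀ s ∈ Icc 1 T, ∑ t ∈ Icc s T, β ^ (t - s) * (c s * x s) ^ 2 ≤
        (1 / (1 - β)) * (c s * x s) ^ 2 := by
      intro s _
      rw [← sum_mul]
      exact mul_le_mul_of_nonneg_right (geom_sub_left hβ0 hβ1 s T) (sq_nonneg _)
    calc (1 - β) * ∑ s ∈ Icc 1 T, ∑ t ∈ Icc s T, β ^ (t - s) * (c s * x s) ^ 2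
        ≤ (1 - β) * ∑ s ∈ Icc 1 T, (1 / (1 - β)) * (c s * x s) ^ 2 :=
          mul_le_mul_of_nonneg_left (sum_le_sum this) h1β.le
      _ = ∑ s ∈ Icc 1 T, (c s * x s) ^ 2 := by
          rw [← mul_sum, ← mul_assoc]
          field_simp
  calc ∑ t ∈ Icc 1 T, (c t * ((1 - β) * ∑ s ∈ Icc 1 t, β ^ (t - s) * x s)) ^ 2
      ≤ ∑ t ∈ Icc 1 T, (1 - β) * ∑ s ∈ Icc 1 t, β ^ (t - s) * (c s * x s) ^ 2 :=
        sum_le_sum step1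
    _ ≤ _ := step2

open Finset in
theorem weighted_momentum_norm_bound (d T : ℕ) (β₁ : ℝ) (hβ : β₁ ∈ Set.Ioo (0 : ℝ) 1)
    (g m : ℕ → Fin d → ℝ) (w : ℕ → Fin d → ℝ)
    (hm : ∀ t ≥ 1, ∀ i, m t i = (1 - β₁) * ∑ s ∈ Icc 1 t, β₁ ^ (t - s) * g s i)
    (hwpos : ∀ t, ∀ i, 0 < w t i)
    (hwmono : ∀ t, ∀ i, w (t + 1) i ≤ w t i) :
    ∑ t ∈ Icc 1 T, ∑ i, (w t i * m t i) ^ 2 ≤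
      ∑ t ∈ Icc 1 T, ∑ i, (w t i * g t i) ^ 2 := by
  obtain ⟨hβ0, hβ1⟩ := hβ
  rw [sum_comm, sum_comm (s := Icc 1 T) (t := univ)]
  apply sum_le_sum
  intro i _
  have hrw : ∀ t ∈ Icc 1 T, (w t i * m t i) ^ 2 =
      (w t i * ((1 - β₁) * ∑ s ∈ Icc 1 t, β₁ ^ (t - s) * g s i)) ^ 2 := by
    intro t ht
    simp only [mem_Icc] at ht
    rw [hm t ht.1 i]
  rw [sum_congr rfl hrw]
  exact key_coord hβ0 hβ1 T (fun t => w t i) (fun t => g t i) (fun t => hwpos t i)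
    (fun t => hwmono t i)
end

section
/- Let γ₀ ∈ (0,1) and set γ = (1+γ₀)/2 and γ₁ = (3−γ₀)γ₀/(1−γ₀). Then for any vectors u, e ∈ R^d and any vector Δ with ‖Δ − (u + e)‖² ≤ γ₀ ‖u + e‖², the residual r = u + e − Δ satisfies ‖r‖² ≤ γ₁ ‖u‖² + γ ‖e‖². -/
theorem error_feedback_one_step (d : ℕ) (γ₀ : ℝ) (hγ₀ : γ₀ ∈ Set.Ioo (0 : ℝ) 1)
    (u e Δ : EuclideanSpace ℝ (Fin d))
    (hcomp : ‖Δ - (u + e)‖ ^ 2 ≤ γ₀ * ‖u + e‖ ^ 2) :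
    ‖u + e - Δ‖ ^ 2 ≤ ((3 - γ₀) * γ₀ / (1 - γ₀)) * ‖u‖ ^ 2 + ((1 + γ₀) / 2) * ‖e‖ ^ 2 := by
  obtain ⟨h0, h1⟩ := hγ₀
  have h1γ : (0:ℝ) < 1 - γ₀ := by linarith
  have hs : ‖u + e - Δ‖ = ‖Δ - (u + e)‖ := by rw [← norm_neg, neg_sub]
  have htri : ‖u + e‖ ≤ ‖u‖ + ‖e‖ := norm_add_le u e
  have h2 : 2 * ‖u‖ * ‖e‖ ≤ (2*γ₀/(1-γ₀)) * ‖u‖^2 + ((1-γ₀)/(2*γ₀)) * ‖e‖^2 := by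
    have heq : (2*γ₀/(1-γ₀)) * ‖u‖^2 + ((1-γ₀)/(2*γ₀)) * ‖e‖^2 - 2 * ‖u‖ * ‖e‖
        = (2*γ₀*‖u‖ - (1-γ₀)*‖e‖)^2 / ((1-γ₀)*(2*γ₀)) := by
      field_simp; ring
    nlinarith [div_nonneg (sq_nonneg (2*γ₀*‖u‖ - (1-γ₀)*‖e‖)) (le_of_lt (mul_pos h1γ (by linarith : (0:ℝ) < 2*γ₀)))]
  have hyoung : ‖u + e‖ ^ 2 ≤ (1 + 2*γ₀/(1-γ₀)) * ‖u‖ ^ 2 + (1 + (1-γ₀)/(2*γ₀)) * ‖e‖ ^ 2 := by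
    nlinarith [norm_nonneg (u+e), norm_nonneg u, norm_nonneg e]
  have e1 : γ₀ * (1 + 2*γ₀/(1-γ₀)) = (3 - γ₀) * γ₀ / (1 - γ₀) - 2*γ₀ := by
    field_simp; ring
  have e2 : γ₀ * (1 + (1-γ₀)/(2*γ₀)) = (1 + γ₀) / 2 := by
    field_simp; ring
  have hmul := mul_le_mul_of_nonneg_left hyoung h0.le
  rw [hs]
  nlinarith [sq_nonneg ‖u‖, sq_nonneg ‖e‖, mul_pos h0 h0]
end
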